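/- Let G be a group regarded as a one-object category. The map from the underlying set of G to the set of objects of D_G that sends the identity element e to the identity morphism of the unique object of F_≃(G) and sends each g ∈ G ∖ {e} to the free isomorphism [g] is a bijection onto the objects of D_G. -/

import Mathlib

/-!
Testing the pushout `F_≃(G)` against codiscrete categories shows that it has a single object.
The counit `ε_G : F(G) ⥤ G` and `c : 1 ⥤ G` form a cocone, so they induce a functor
`F_≃(G) ⥤ G` sending `[g]` to `g`; hence the `[g]` are pairwise distinct. The gluing makes
`[e]` the identity, and the image of `1` consists of identities, so every object of `D_G` is,
up to identities of equal objects, some `[g]`; thus `toObjDG` is `g ↦ [g]` and is a bijection.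
-/

open CategoryTheory

universe u

namespace Unrolling

/-- A morphism is "an identity" if it is the `eqToHom` of an equality of objects. -/
def IsIdArrow {C : Type*} [Category C] {x y : C} (m : x ⟶ y) : Prop :=
  ∃ h : x = y, m = eqToHom h

/-- A morphism lies in the image of the functor `F` (up to the evident equalities of objects). -/
def InImg {A C : Type*} [Category A] [Category C] (F : A ⥤ C) {x y : C} (m : x ⟶ y) : Prop :=
  ∃ (a b : A) (k : a ⟶ b) (ha : F.obj a = x) (hb : F.obj b = y),
    m = eqToHom ha.symm ≫ F.map k ≫ eqToHom hb

/-- The free category comonad applied to a functor `c : A ⥤ B`, i.e. the induced functor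
between path categories. -/
def freeMap {A B : Type*} [Category A] [Category B] (c : A ⥤ B) : Paths A ⥤ Paths B where
  obj x := c.obj x
  map f := c.toPrefunctor.mapPath f
  map_id _ := rfl
  map_comp f g := c.toPrefunctor.mapPath_comp f g

/-- A "free isomorphism": the image under `i : Paths R ⥤ F_≃(R)` of a length-one path whose
arrow is an isomorphism of `R`. -/
def FreeIso {R Fs : Type*} [Category R] [Category Fs] (i : Paths R ⥤ Fs)
    {x y : Fs} (m : x ⟶ y) : Prop :=
  ∃ (a b : R) (f : a ⟶ b) (ha : i.obj ((Paths.of R).obj a) = x) (hb : i.obj ((Paths.of R).obj b) = y),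
    IsIso f ∧ m = eqToHom ha.symm ≫ i.map ((Paths.of R).map f) ≫ eqToHom hb

/-- The twisted arrow category of `C`: objects are morphisms of `C`. -/
structure Tw (C : Type*) [Category C] where
  left : C
  right : C
  hom : left ⟶ right

/-- Morphisms `f → f'` in the twisted arrow category: pairs `(u, v)` with `f' = u ≫ f ≫ v`. -/
@[ext]
structure TwHom {C : Type*} [Category C] (X Y : Tw C) where
  u : Y.left ⟶ X.left
  v : X.right ⟶ Y.right
  w : Y.hom = u ≫ X.hom ≫ v

instance {C : Type*} [Category C] : Category (Tw C) where
  Hom := TwHom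
  id X := ⟨𝟙 _, 𝟙 _, by simp⟩
  comp {X Y Z} f g := ⟨g.u ≫ f.u, f.v ≫ g.v, by rw [g.w, f.w]; simp⟩
  id_comp f := by apply TwHom.ext <;> simp [CategoryStruct.id, CategoryStruct.comp]
  comp_id f := by apply TwHom.ext <;> simp [CategoryStruct.id, CategoryStruct.comp]
  assoc f g h := by apply TwHom.ext <;> simp [CategoryStruct.comp]

/-- The defining property of the objects of `D_R` inside the twisted arrow category of
`F_≃(R)`. -/
def InD {R₀ R Fs : Type*} [Category R₀] [Category R] [Category Fs]
    (i₀ : R₀ ⥤ Fs) (i : Paths R ⥤ Fs) (X : Tw Fs) : Prop :=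
  ∃ (z : Fs) (g : X.left ⟶ z) (h : z ⟶ X.right),
    X.hom = g ≫ h ∧ (IsIdArrow g ∨ InImg i₀ g) ∧ (IsIdArrow h ∨ FreeIso i h)

/-- The category `D_R`, a full subcategory of the twisted arrow category of `F_≃(R)`. -/
abbrev DR {R₀ R Fs : Type*} [Category R₀] [Category R] [Category Fs]
    (i₀ : R₀ ⥤ Fs) (i : Paths R ⥤ Fs) := ObjectProperty.FullSubcategory (InD i₀ i)

variable (G : Type) [Group G] {Fs : Type} [SmallCategory Fs]

/-- The unique functor from the terminal category to the one-object category on `G`. -/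
def cG : Discrete PUnit.{1} ⥤ SingleObj G := (Functor.const _).obj (SingleObj.star G)

/-- The image in `F_≃(G)` of the length-one path on the arrow `g : G`. -/
def freeArrow (i : Paths (SingleObj G) ⥤ Fs) (g : G) :
    i.obj ((Paths.of (SingleObj G)).obj (SingleObj.star G)) ⟶ i.obj ((Paths.of (SingleObj G)).obj (SingleObj.star G)) :=
  i.map ((Paths.of (SingleObj G)).map (SingleObj.toEnd G g))

/-- The object of `D_G` given by the identity morphism of the unique object of `F_≃(G)`. -/
def idObj (i₀ : Discrete PUnit.{1} ⥤ Fs) (i : Paths (SingleObj G) ⥤ Fs) : DR i₀ i :=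
  ⟨⟨_, _, 𝟙 (i.obj ((Paths.of (SingleObj G)).obj (SingleObj.star G)))⟩,
    ⟨_, 𝟙 _, 𝟙 _, by simp, Or.inl ⟨rfl, rfl⟩, Or.inl ⟨rfl, rfl⟩⟩⟩

/-- The object of `D_G` given by the free isomorphism `[g]`. -/
def freeObj (i₀ : Discrete PUnit.{1} ⥤ Fs) (i : Paths (SingleObj G) ⥤ Fs) (g : G) : DR i₀ i :=
  ⟨⟨_, _, freeArrow G i g⟩,
    ⟨_, 𝟙 _, freeArrow G i g, by simp,
      Or.inl ⟨rfl, rfl⟩,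
      Or.inr ⟨SingleObj.star G, SingleObj.star G, SingleObj.toEnd G g, rfl, rfl,
        inferInstance, by simp [freeArrow]⟩⟩⟩

open Classical in
/-- The map from the underlying set of `G` to the objects of `D_G`, sending the identity
element to the identity morphism of the unique object of `F_≃(G)` and each `g ≠ 1` to the
free isomorphism `[g]`. -/
noncomputable def toObjDG (i₀ : Discrete PUnit.{1} ⥤ Fs) (i : Paths (SingleObj G) ⥤ Fs)
    (g : G) : DR i₀ i :=
  if g = 1 then idObj G i₀ i else freeObj G i₀ i g

section Pushout

variable {A B C P : Type*} [Category A] [Category B] [Category C] [Category P]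
  {f : A ⥤ B} {g : A ⥤ C} {i₀ : B ⥤ P} {i : C ⥤ P}

theorem functor_ext_of_isPushout (hcomm : f ⋙ i₀ = g ⋙ i)
    (huniv : ∀ (T : Cat.{0, 0}) (q₀ : B ⥤ T) (q : C ⥤ T),
      f ⋙ q₀ = g ⋙ q → ∃! d : P ⥤ T, i₀ ⋙ d = q₀ ∧ i ⋙ d = q)
    {T : Cat.{0, 0}} {d d' : P ⥤ T} (h₀ : i₀ ⋙ d = i₀ ⋙ d') (h : i ⋙ d = i ⋙ d') : d = d' :=
  (huniv T (i₀ ⋙ d) (i ⋙ d) (by rw [← Functor.assoc, hcomm, Functor.assoc])).unique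
    ⟨rfl, rfl⟩ ⟨h₀.symm, h.symm⟩

/-- Test the pushout against the codiscrete category on `Prop`: a functor into it is just a
function on objects. -/
theorem obj_mem_range_of_isPushout (hcomm : f ⋙ i₀ = g ⋙ i)
    (huniv : ∀ (T : Cat.{0, 0}) (q₀ : B ⥤ T) (q : C ⥤ T),
      f ⋙ q₀ = g ⋙ q → ∃! d : P ⥤ T, i₀ ⋙ d = q₀ ∧ i ⋙ d = q) (x : P) :
    (∃ b, i₀.obj b = x) ∨ ∃ c, i.obj c = x := by
  have key := functor_ext_of_isPushout hcomm huniv (T := Cat.of (Codiscrete Prop))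
    (d := Codiscrete.functor fun y => (∃ b, i₀.obj b = y) ∨ ∃ c, i.obj c = y)
    (d' := Codiscrete.functor fun _ => True)
    (CategoryTheory.Functor.ext fun b => congrArg Codiscrete.mk (eq_true (Or.inl ⟨b, rfl⟩)))
    (CategoryTheory.Functor.ext fun c => congrArg Codiscrete.mk (eq_true (Or.inr ⟨c, rfl⟩)))
  exact of_eq_true (congrArg Codiscrete.as (Functor.congr_obj key x))

end Pushout

theorem freeMap_comp_pathComposition {A B : Type*} [Category A] [Category B] (c : A ⥤ B) :
    freeMap c ⋙ pathComposition B = pathComposition A ⋙ c :=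
  Paths.ext_functor rfl fun _ _ e => by
    change composePath (c.toPrefunctor.mapPath e.toPath) =
      𝟙 _ ≫ c.map (composePath e.toPath) ≫ 𝟙 _
    rw [Prefunctor.mapPath_toPath, composePath_toPath, composePath_toPath, Category.id_comp,
      Category.comp_id]
    rfl

theorem Tw.ext {C : Type*} [Category C] {X Y : Tw C} (hl : X.left = Y.left)
    (hr : X.right = Y.right) (h : X.hom = eqToHom hl ≫ Y.hom ≫ eqToHom hr.symm) : X = Y := by
  obtain ⟨x, y, m⟩ := X
  obtain ⟨x', y', m'⟩ := Y
  dsimp only at hl hr h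
  subst hl hr
  simpa using h

theorem isIdArrow_of_inImg {α C : Type*} [Category C] {F : Discrete α ⥤ C} {x y : C}
    {m : x ⟶ y} (hm : InImg F m) : IsIdArrow m := by
  obtain ⟨a, b, k, rfl, rfl, rfl⟩ := hm
  obtain rfl : a = b := Discrete.ext (Discrete.eq_of_hom k)
  exact ⟨rfl, by simp [Subsingleton.elim k (𝟙 a)]⟩

section Group

variable {G} {i₀ : Discrete PUnit.{1} ⥤ Fs} {i : Paths (SingleObj G) ⥤ Fs}

theorem obj_eq_of_isPushout
    (hcomm : pathComposition (Discrete PUnit.{1}) ⋙ i₀ = freeMap (cG G) ⋙ i)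
    (huniv : ∀ (T : Cat.{0, 0}) (q₀ : Discrete PUnit.{1} ⥤ T) (q : Paths (SingleObj G) ⥤ T),
      pathComposition (Discrete PUnit.{1}) ⋙ q₀ = freeMap (cG G) ⋙ q →
      ∃! d : Fs ⥤ T, i₀ ⋙ d = q₀ ∧ i ⋙ d = q) (x : Fs) :
    x = i.obj ((Paths.of (SingleObj G)).obj (SingleObj.star G)) := by
  rcases obj_mem_range_of_isPushout hcomm huniv x with ⟨b, rfl⟩ | ⟨c, rfl⟩
  · exact Functor.congr_obj hcomm b
  · rfl

theorem freeArrow_one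
    (hcomm : pathComposition (Discrete PUnit.{1}) ⋙ i₀ = freeMap (cG G) ⋙ i) :
    freeArrow G i 1 = 𝟙 _ := by
  have h := Functor.congr_hom hcomm ((Paths.of _).map (𝟙 (Discrete.mk PUnit.unit)))
  have h₀ : (pathComposition _ ⋙ i₀).map ((Paths.of _).map (𝟙 (Discrete.mk PUnit.unit))) = 𝟙 _ :=
    i₀.map_id _
  rw [h₀, eq_comm, eqToHom_comp_iff, comp_eqToHom_iff] at h
  simp only [Category.comp_id, eqToHom_trans, eqToHom_refl] at h
  exact h

theorem map_freeArrow {d : Fs ⥤ SingleObj G} (hd : i ⋙ d = pathComposition (SingleObj G))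
    (g : G) :
    d.map (freeArrow G i g) = SingleObj.toEnd G g := by
  refine (Functor.congr_hom hd ((Paths.of (SingleObj G)).map (SingleObj.toEnd G g))).trans ?_
  change 𝟙 _ ≫ composePath (SingleObj.toEnd G g).toPath ≫ 𝟙 _ = _
  simp

theorem freeArrow_injective {d : Fs ⥤ SingleObj G} (hd : i ⋙ d = pathComposition (SingleObj G)) :
    Function.Injective (freeArrow G i) := fun g g' h =>
  (SingleObj.toEnd G).injective <| by rw [← map_freeArrow hd, h, map_freeArrow hd]

theorem freeObj_injective {d : Fs ⥤ SingleObj G} (hd : i ⋙ d = pathComposition (SingleObj G)) :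
    Function.Injective (freeObj G i₀ i) := fun _ _ h =>
  freeArrow_injective hd (eq_of_heq (Tw.mk.inj (congrArg (·.obj) h)).2.2)

theorem toObjDG_eq_freeObj
    (hcomm : pathComposition (Discrete PUnit.{1}) ⋙ i₀ = freeMap (cG G) ⋙ i) :
    toObjDG G i₀ i = freeObj G i₀ i := by
  funext g
  unfold toObjDG
  split_ifs with hg
  · subst hg
    apply ObjectProperty.FullSubcategory.ext
    simp only [idObj, freeObj, freeArrow_one hcomm]
  · rfl

theorem exists_eq_conj_freeArrow
    (hcomm : pathComposition (Discrete PUnit.{1}) ⋙ i₀ = freeMap (cG G) ⋙ i)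
    {z y : Fs} (hz : z = i.obj ((Paths.of (SingleObj G)).obj (SingleObj.star G)))
    (hy : y = i.obj ((Paths.of (SingleObj G)).obj (SingleObj.star G))) {v : z ⟶ y}
    (hv : IsIdArrow v ∨ FreeIso i v) :
    ∃ g, v = eqToHom hz ≫ freeArrow G i g ≫ eqToHom hy.symm := by
  rcases hv with ⟨p, rfl⟩ | ⟨a, b, f, rfl, rfl, -, rfl⟩
  · exact ⟨1, by simp [freeArrow_one hcomm]⟩
  · exact ⟨(SingleObj.toEnd G).symm f, rfl⟩

theorem freeObj_surjective
    (hcomm : pathComposition (Discrete PUnit.{1}) ⋙ i₀ = freeMap (cG G) ⋙ i)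
    (huniv : ∀ (T : Cat.{0, 0}) (q₀ : Discrete PUnit.{1} ⥤ T) (q : Paths (SingleObj G) ⥤ T),
      pathComposition (Discrete PUnit.{1}) ⋙ q₀ = freeMap (cG G) ⋙ q →
      ∃! d : Fs ⥤ T, i₀ ⋙ d = q₀ ∧ i ⋙ d = q) :
    Function.Surjective (freeObj G i₀ i) := by
  rintro ⟨⟨x, y, m⟩, z, u, v, hm, hu, hv⟩
  have hz := obj_eq_of_isPushout hcomm huniv z
  have hy := obj_eq_of_isPushout hcomm huniv y
  obtain ⟨p, rfl⟩ : IsIdArrow u := hu.elim id isIdArrow_of_inImg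
  obtain ⟨g, rfl⟩ := exists_eq_conj_freeArrow hcomm hz hy hv
  refine ⟨g, ObjectProperty.FullSubcategory.ext (Tw.ext (p.trans hz) hy (hm.trans ?_)).symm⟩
  simp [freeObj]

end Group

/-- For a group `G` regarded as a one-object category, the map
`G → D_G` sending `e` to the identity morphism of the unique object of `F_≃(G)` and each
`g ≠ e` to the free isomorphism `[g]` is a bijection onto the objects of `D_G`. -/
theorem toObjDG_bijective
    (i₀ : Discrete PUnit.{1} ⥤ Fs) (i : Paths (SingleObj G) ⥤ Fs)
    (hcomm : pathComposition (Discrete PUnit.{1}) ⋙ i₀ = freeMap (cG G) ⋙ i)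
    (huniv : ∀ (T : Cat.{0, 0}) (q₀ : Discrete PUnit.{1} ⥤ T) (q : Paths (SingleObj G) ⥤ T),
      pathComposition (Discrete PUnit.{1}) ⋙ q₀ = freeMap (cG G) ⋙ q →
      ∃! d : Fs ⥤ T, i₀ ⋙ d = q₀ ∧ i ⋙ d = q) :
    Function.Bijective (toObjDG G i₀ i) := by
  obtain ⟨d, ⟨-, hd⟩, -⟩ := huniv (Cat.of (SingleObj G)) (cG G) (pathComposition (SingleObj G))
    (freeMap_comp_pathComposition (cG G)).symm
  rw [toObjDG_eq_freeObj hcomm]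
  exact ⟨freeObj_injective hd, freeObj_surjective hcomm huniv⟩

end Unrolling
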